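/- arXiv:2406.01816 — 2 statements merged into one kernel-verified Lean document; each statement's English description precedes it below -/
import Mathlib

section
/- Let H be a complex Hilbert space and let 𝒫 be a nonempty collection of partitions of H. Call two cells u, v ∈ ⋃𝒫 equivalent if there is a finite chain u = w₀, w₁, …, w_k = v of elements of ⋃𝒫 in which consecutive members are not orthogonal. Then the set Q₀ = { ⨆C : C an equivalence class of ⋃𝒫 } is a partition of H, and Q₀ is the least upper bound of 𝒫 in the refinement order. -/
variable {H : Type*} [NormedAddCommGroup H] [InnerProductSpace ℂ H]

/-- Two subspaces of a complex inner product space are orthogonal when every vector of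
one is orthogonal to every vector of the other. -/
def Orth (p q : Submodule ℂ H) : Prop :=
  ∀ x ∈ p, ∀ y ∈ q, @inner ℂ H _ x y = 0

/-- A partition of `H` is a set of nonzero closed subspaces of `H` that are pairwise
orthogonal and whose supremum in the complete lattice of closed subspaces of `H`
(i.e. the topological closure of the submodule supremum) is all of `H`. -/
def IsPartition (P : Set (Submodule ℂ H)) : Prop :=
  (∀ p ∈ P, p ≠ ⊥) ∧
  (∀ p ∈ P, IsClosed (p : Set H)) ∧
  (∀ p ∈ P, ∀ q ∈ P, p ≠ q → Orth p q) ∧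
  (sSup P).topologicalClosure = ⊤

/-- `P₁` refines `P₂` when every cell of `P₁` is contained in some cell of `P₂`. -/
def Refines (P₁ P₂ : Set (Submodule ℂ H)) : Prop :=
  ∀ p ∈ P₁, ∃ q ∈ P₂, p ≤ q

/-- A multicell of a partition `P` is the supremum (in the lattice of closed subspaces)
of a possibly empty subset of `P`. -/
def IsMulticell (P : Set (Submodule ℂ H)) (m : Submodule ℂ H) : Prop :=
  ∃ C ⊆ P, m = (sSup C).topologicalClosure

/-- Two subspaces `u`, `v` in a family `U` are chain-equivalent when there is a finite chain
`u = w₀, w₁, …, w_k = v` of members of `U` in which consecutive members are not orthogonal. -/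
def ChainEquiv (U : Set (Submodule ℂ H)) (u v : Submodule ℂ H) : Prop :=
  ∃ k : ℕ, ∃ w : Fin (k + 1) → Submodule ℂ H,
    w 0 = u ∧ w (Fin.last k) = v ∧ (∀ i, w i ∈ U) ∧
      ∀ i : Fin k, ¬ Orth (w i.castSucc) (w i.succ)

/-- The candidate least upper bound: the set of suprema (in the lattice of closed subspaces)
of the chain-equivalence classes of the cells occurring in the collection `Ps`. -/
def lubCandidate (Ps : Set (Set (Submodule ℂ H))) : Set (Submodule ℂ H) :=
  {m : Submodule ℂ H | ∃ u ∈ ⋃₀ Ps,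
    m = (sSup {v ∈ ⋃₀ Ps | ChainEquiv (⋃₀ Ps) u v}).topologicalClosure}

/-!
Two cells from different chain classes are orthogonal, since a non-orthogonal pair would link
the classes; orthogonality survives closed spans, so the closed spans of the classes are pairwise
orthogonal closed subspaces. Each contains the cells of its class, so it is nonzero and every
partition in the collection refines `Q₀`, which therefore spans `H`. Conversely, if every
partition refines `Q'`, then consecutive members of a chain lie in the same cell of `Q'`, because
distinct cells of `Q'` are orthogonal; so a whole class, and with it its closed span, lies in
a single cell of `Q'`.
-/

open Relation Submodule

theorem orth_iff_isOrtho {p q : Submodule ℂ H} : Orth p q ↔ p ⟂ q :=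
  isOrtho_iff_inner_eq.symm

theorem Submodule.IsOrtho.topologicalClosure_left {U V : Submodule ℂ H} (h : U ⟂ V) :
    U.topologicalClosure ⟂ V :=
  U.topologicalClosure_minimal h V.isClosed_orthogonal

theorem Submodule.IsOrtho.topologicalClosure {U V : Submodule ℂ H} (h : U ⟂ V) :
    U.topologicalClosure ⟂ V.topologicalClosure :=
  (h.topologicalClosure_left.symm.topologicalClosure_left).symm

theorem Refines.sSup_le {P Q : Set (Submodule ℂ H)} (h : Refines P Q) : sSup P ≤ sSup Q :=
  _root_.sSup_le fun p hp => let ⟨_, hq, hpq⟩ := h p hp; hpq.trans (le_sSup hq)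

def NonorthAdj (U : Set (Submodule ℂ H)) (p q : Submodule ℂ H) : Prop :=
  p ∈ U ∧ q ∈ U ∧ ¬ p ⟂ q

instance (U : Set (Submodule ℂ H)) : Std.Symm (NonorthAdj U) where
  symm _ _ h := ⟨h.2.1, h.1, fun h' => h.2.2 h'.symm⟩

namespace ChainEquiv

variable {U : Set (Submodule ℂ H)} {u v w : Submodule ℂ H}

theorem iff_reflTransGen : ChainEquiv U u v ↔ u ∈ U ∧ ReflTransGen (NonorthAdj U) u v := by
  constructor
  · rintro ⟨k, w, rfl, rfl, hmem, hstep⟩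
    have hreach : ∀ i, ReflTransGen (NonorthAdj U) (w 0) (w i) :=
      Fin.induction .refl fun i ih =>
        ih.tail ⟨hmem _, hmem _, orth_iff_isOrtho.not.mp (hstep i)⟩
    exact ⟨hmem 0, hreach _⟩
  · rintro ⟨hu, huv⟩
    induction huv with
    | refl => exact ⟨0, fun _ => u, rfl, rfl, fun _ => hu, finZeroElim⟩
    | @tail v z _ hvz ih =>
      obtain ⟨k, w, hw0, hwk, hmem, hstep⟩ := ih
      refine ⟨k + 1, Fin.snoc w z, by simpa using hw0, by simp,
        Fin.lastCases ?_ ?_, Fin.lastCases ?_ ?_⟩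
      · simpa using hvz.2.1
      · simpa using hmem
      · simpa [hwk, orth_iff_isOrtho] using hvz.2.2
      · intro i
        rw [Fin.succ_castSucc, Fin.snoc_castSucc, Fin.snoc_castSucc]
        exact hstep i

theorem refl (hu : u ∈ U) : ChainEquiv U u u :=
  iff_reflTransGen.mpr ⟨hu, .refl⟩

theorem of_not_isOrtho (hu : u ∈ U) (hv : v ∈ U) (huv : ¬ u ⟂ v) : ChainEquiv U u v :=
  iff_reflTransGen.mpr ⟨hu, .single ⟨hu, hv, huv⟩⟩

theorem mem_right (h : ChainEquiv U u v) : v ∈ U :=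
  let ⟨_, _, _, hv, hmem, _⟩ := h; hv ▸ hmem _

theorem symm (h : ChainEquiv U u v) : ChainEquiv U v u :=
  iff_reflTransGen.mpr ⟨h.mem_right, Std.Symm.symm _ _ (iff_reflTransGen.mp h).2⟩

theorem trans (huv : ChainEquiv U u v) (hvw : ChainEquiv U v w) : ChainEquiv U u w :=
  iff_reflTransGen.mpr
    ⟨(iff_reflTransGen.mp huv).1, (iff_reflTransGen.mp huv).2.trans (iff_reflTransGen.mp hvw).2⟩

theorem setOf_eq (h : ChainEquiv U u v) :
    {w ∈ U | ChainEquiv U u w} = {w ∈ U | ChainEquiv U v w} :=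
  Set.ext fun _ => and_congr_right fun _ => ⟨h.symm.trans, h.trans⟩

theorem le_of_le {Q : Set (Submodule ℂ H)} (hQ : Q.Pairwise Orth) (hUQ : ∀ p ∈ U, ∃ q ∈ Q, p ≤ q)
    {q : Submodule ℂ H} (hq : q ∈ Q) (huq : u ≤ q) (huv : ChainEquiv U u v) : v ≤ q := by
  obtain ⟨-, hreach⟩ := iff_reflTransGen.mp huv
  clear huv
  induction hreach with
  | refl => exact huq
  | @tail a b _ hab hle =>
    obtain ⟨q', hq', hbq'⟩ := hUQ b hab.2.1
    obtain rfl | hne := eq_or_ne q q'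
    · exact hbq'
    · exact absurd ((orth_iff_isOrtho.mp (hQ hq hq' hne)).mono hle hbq') hab.2.2

end ChainEquiv

theorem isOrtho_of_setOf_chainEquiv_ne {U : Set (Submodule ℂ H)} {u v : Submodule ℂ H}
    (hne : {w ∈ U | ChainEquiv U u w} ≠ {w ∈ U | ChainEquiv U v w}) :
    ∀ a ∈ {w ∈ U | ChainEquiv U u w}, ∀ b ∈ {w ∈ U | ChainEquiv U v w}, a ⟂ b := by
  rintro a ⟨ha, hua⟩ b ⟨hb, hvb⟩
  by_contra hab
  exact hne ((hua.trans ((ChainEquiv.of_not_isOrtho ha hb hab).trans hvb.symm)).setOf_eq)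

theorem le_topologicalClosure_sSup_setOf_chainEquiv {U : Set (Submodule ℂ H)} {u : Submodule ℂ H}
    (hu : u ∈ U) : u ≤ (sSup {v ∈ U | ChainEquiv U u v}).topologicalClosure :=
  (le_sSup (s := {v ∈ U | ChainEquiv U u v}) ⟨hu, .refl hu⟩).trans (le_topologicalClosure _)

section lubCandidate

variable {Ps : Set (Set (Submodule ℂ H))}

theorem refines_lubCandidate {P : Set (Submodule ℂ H)} (hP : P ∈ Ps) :
    Refines P (lubCandidate Ps) :=
  fun p hp => ⟨_, ⟨p, ⟨P, hP, hp⟩, rfl⟩, le_topologicalClosure_sSup_setOf_chainEquiv ⟨P, hP, hp⟩⟩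

theorem isPartition_lubCandidate (hne : Ps.Nonempty) (h : ∀ P ∈ Ps, IsPartition P) :
    IsPartition (lubCandidate Ps) := by
  refine ⟨?_, ?_, ?_, ?_⟩
  · rintro _ ⟨u, ⟨P, hP, hu⟩, rfl⟩ hbot
    exact (h P hP).1 u hu
      (le_bot_iff.mp (hbot ▸ le_topologicalClosure_sSup_setOf_chainEquiv ⟨P, hP, hu⟩))
  · rintro _ ⟨u, -, rfl⟩
    exact isClosed_topologicalClosure _
  · rintro _ ⟨u, -, rfl⟩ _ ⟨v, -, rfl⟩ hne
    have huv := isOrtho_of_setOf_chainEquiv_ne fun hs => hne (by rw [hs])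
    exact orth_iff_isOrtho.mpr (IsOrtho.topologicalClosure <|
      isOrtho_sSup_left.mpr fun a ha => isOrtho_sSup_right.mpr fun b hb => huv a ha b hb)
  · obtain ⟨P, hP⟩ := hne
    exact top_unique ((h P hP).2.2.2 ▸ topologicalClosure_mono (refines_lubCandidate hP).sSup_le)

theorem lubCandidate_refines {Q : Set (Submodule ℂ H)} (hQ : IsPartition Q)
    (h : ∀ P ∈ Ps, Refines P Q) : Refines (lubCandidate Ps) Q := by
  rintro _ ⟨u, ⟨P, hP, hu⟩, rfl⟩
  obtain ⟨q, hq, huq⟩ := h P hP u hu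
  refine ⟨q, hq, topologicalClosure_minimal _ (_root_.sSup_le ?_) (hQ.2.1 q hq)⟩
  rintro v ⟨-, huv⟩
  exact huv.le_of_le hQ.2.2.1 (by rintro p ⟨P', hP', hp⟩; exact h P' hP' p hp) hq huq

end lubCandidate

theorem lubCandidate_isPartition_isLUB_general
    (Ps : Set (Set (Submodule ℂ H))) (hne : Ps.Nonempty) (h : ∀ P ∈ Ps, IsPartition P) :
    IsPartition (lubCandidate Ps) ∧
      (∀ P ∈ Ps, Refines P (lubCandidate Ps)) ∧
      ∀ Q' : Set (Submodule ℂ H), IsPartition Q' → (∀ P ∈ Ps, Refines P Q') →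
        Refines (lubCandidate Ps) Q' :=
  ⟨isPartition_lubCandidate hne h, fun _ hP => refines_lubCandidate hP,
    fun _ hQ' href => lubCandidate_refines hQ' href⟩

/-- Let `H` be a complex Hilbert space and `Ps` a nonempty collection of
partitions of `H`.  The set `Q₀` of suprema of the chain-equivalence classes of `⋃ Ps` is a
partition of `H`, and `Q₀` is the least upper bound of `Ps` in the refinement order. -/
theorem lubCandidate_isPartition_isLUB [CompleteSpace H]
    (Ps : Set (Set (Submodule ℂ H))) (hne : Ps.Nonempty) (h : ∀ P ∈ Ps, IsPartition P) :
    IsPartition (lubCandidate Ps) ∧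
      (∀ P ∈ Ps, Refines P (lubCandidate Ps)) ∧
      ∀ Q' : Set (Submodule ℂ H), IsPartition Q' → (∀ P ∈ Ps, Refines P Q') →
        Refines (lubCandidate Ps) Q' :=
  lubCandidate_isPartition_isLUB_general Ps hne h
end

section
/- Let (S, ⊑) be a cpo, let H be a nonzero finite-dimensional complex Hilbert space, let (Pᵢ, fᵢ)_{i≥1} be a monotone S-labeled sequence of partitions of H, let P∞ be the eventual supremum of (Pᵢ), and let f∞ : P∞ → S be a limit labeling for this data. Then for every positive integer n, every cell p ∈ Pₙ, and every cell p∞ ∈ P∞, if p is not orthogonal to p∞ then fₙ(p) ⊑ f∞(p∞). -/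
variable {H : Type*} [NormedAddCommGroup H] [InnerProductSpace ℂ H]

variable {S : Type*} [PartialOrder S]

/-- A monotone `S`-labeled sequence of partitions of `H`: a sequence `P i` of partitions
together with labelings `f i` of their cells such that for `i ≤ j` and non-orthogonal cells
`p ∈ P i`, `q ∈ P j` one has `f i p ⊑ f j q`. -/
def MonotoneLabeled (P : ℕ → Set (Submodule ℂ H)) (f : ℕ → Submodule ℂ H → S) : Prop :=
  ∀ i j : ℕ, i ≤ j → ∀ p ∈ P i, ∀ q ∈ P j, ¬ Orth p q → f i p ≤ f j q

/-- A partition `Pinf` is the eventual supremum of the sequence `P` if, for all sufficiently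
large `n`, `Pinf` is the least upper bound of `{P i : i ≥ n}` in the refinement order. -/
def IsEventualSup (P : ℕ → Set (Submodule ℂ H)) (Pinf : Set (Submodule ℂ H)) : Prop :=
  ∃ N : ℕ, ∀ n, N ≤ n →
    (∀ i, n ≤ i → Refines (P i) Pinf) ∧
      ∀ Q : Set (Submodule ℂ H), IsPartition Q →
        (∀ i, n ≤ i → Refines (P i) Q) → Refines Pinf Q

/-- A limit labeling `finf : Pinf → S` for a monotone `S`-labeled sequence of partitions:
for every cell `pinf ∈ Pinf` and every sequence of cells `p i ∈ P i` with consecutive cells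
not orthogonal and each `p i` not orthogonal to `pinf`, `finf pinf` is the supremum of the
(monotone increasing) sequence `f i (p i)`. -/
def IsLimitLabeling (P : ℕ → Set (Submodule ℂ H)) (f : ℕ → Submodule ℂ H → S)
    (Pinf : Set (Submodule ℂ H)) (finf : Submodule ℂ H → S) : Prop :=
  ∀ pinf ∈ Pinf, ∀ p : ℕ → Submodule ℂ H, (∀ i, p i ∈ P i) →
    (∀ i, ¬ Orth (p i) (p (i + 1))) → (∀ i, ¬ Orth (p i) pinf) →
      IsLUB (Set.range fun i => f i (p i)) (finf pinf)

/-!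
Between two non-orthogonal subspaces `a`, `b` there is, in every partition, a cell
non-orthogonal to both: if `⟪x, v⟫ ≠ 0` with `x ∈ a`, `v ∈ b`, expand `v` along the cells;
some summand `z` has `⟪x, z⟫ ≠ 0`, and `⟪z, v⟫ = ‖z‖² ≠ 0`. Stepping forward and backward from
`p` through the partitions `P i`, always keeping a cell non-orthogonal to `pinf`, yields a chain
of cells through `p` of the kind the limit labeling quantifies over, so `f n p` is one of the
labels whose supremum is `finf pinf`.
-/

section Chain

variable {α : Type*} {A : ℕ → Set α} {R : α → α → Prop}

lemma exists_chain_ending_at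
    (hbwd : ∀ i, ∀ b ∈ A (i + 1), ∃ a ∈ A i, R a b) {n : ℕ} {a : α} (ha : a ∈ A n) :
    ∃ s : ℕ → α, s n = a ∧ (∀ i ≤ n, s i ∈ A i) ∧ ∀ i < n, R (s i) (s (i + 1)) := by
  induction n generalizing a with
  | zero => exact ⟨fun _ => a, rfl, by simp [ha], by simp⟩
  | succ n ih =>
    obtain ⟨b, hb, hba⟩ := hbwd n a ha
    obtain ⟨s, hsn, hsA, hsR⟩ := ih hb
    refine ⟨Function.update s (n + 1) a, by simp, fun i hi => ?_, fun i hi => ?_⟩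
    · rcases hi.lt_or_eq with hi | rfl
      · simpa [Function.update_of_ne hi.ne] using hsA i (by omega)
      · simpa using ha
    · rcases (Nat.lt_succ_iff.mp hi).lt_or_eq with hi | rfl
      · simpa [Function.update_of_ne (show i ≠ n + 1 by omega),
          Function.update_of_ne (show i + 1 ≠ n + 1 by omega)] using hsR i hi
      · simpa [hsn] using hba

lemma exists_chain_extending
    (hfwd : ∀ i, ∀ a ∈ A i, ∃ b ∈ A (i + 1), R a b) {n : ℕ} {s : ℕ → α}
    (hsA : ∀ i ≤ n, s i ∈ A i) (hsR : ∀ i < n, R (s i) (s (i + 1))) :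
    ∃ t : ℕ → α, (∀ i ≤ n, t i = s i) ∧ ∀ i, t i ∈ A i ∧ R (t i) (t (i + 1)) := by
  classical
  choose! next hnextA hnextR using hfwd
  let t : ℕ → α := fun i => Nat.rec (s 0) (fun i b => if i < n then s (i + 1) else next i b) i
  have ht_succ : ∀ i, t (i + 1) = if i < n then s (i + 1) else next i (t i) := fun _ => rfl
  have hts : ∀ i ≤ n, t i = s i := by
    intro i hi
    induction i with
    | zero => rfl
    | succ i _ => rw [ht_succ, if_pos (by omega)]
  have htA : ∀ i, t i ∈ A i := by
    intro i
    induction i with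
    | zero => exact hts 0 (Nat.zero_le n) ▸ hsA 0 (Nat.zero_le n)
    | succ i ih =>
      rw [ht_succ]
      split_ifs with hi
      · exact hsA (i + 1) hi
      · exact hnextA i (t i) ih
  refine ⟨t, hts, fun i => ⟨htA i, ?_⟩⟩
  rw [ht_succ]
  split_ifs with hi
  · rw [hts i hi.le]
    exact hsR i hi
  · exact hnextR i (t i) (htA i)

lemma exists_chain_through
    (hfwd : ∀ i, ∀ a ∈ A i, ∃ b ∈ A (i + 1), R a b)
    (hbwd : ∀ i, ∀ b ∈ A (i + 1), ∃ a ∈ A i, R a b) {n : ℕ} {a : α} (ha : a ∈ A n) :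
    ∃ s : ℕ → α, s n = a ∧ ∀ i, s i ∈ A i ∧ R (s i) (s (i + 1)) := by
  obtain ⟨s, hsn, hsA, hsR⟩ := exists_chain_ending_at hbwd ha
  obtain ⟨t, hts, ht⟩ := exists_chain_extending hfwd hsA hsR
  exact ⟨t, (hts n le_rfl).trans hsn, ht⟩

end Chain

lemma Orth.symm {p q : Submodule ℂ H} (h : Orth p q) : Orth q p :=
  fun x hx y hy => inner_eq_zero_symm.mp (h y hy x hx)

lemma IsPartition.sSup_eq_top [FiniteDimensional ℂ H] {Q : Set (Submodule ℂ H)}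
    (hQ : IsPartition Q) : sSup Q = ⊤ := by
  rw [← (Submodule.closed_of_finiteDimensional (sSup Q)).submodule_topologicalClosure_eq]
  exact hQ.2.2.2

lemma exists_mem_not_orth_of_sSup_eq_top {Q : Set (Submodule ℂ H)}
    (hQ : ∀ c ∈ Q, ∀ d ∈ Q, c ≠ d → Orth c d) (htop : sSup Q = ⊤)
    {a b : Submodule ℂ H} (hab : ¬ Orth a b) :
    ∃ c ∈ Q, ¬ Orth a c ∧ ¬ Orth c b := by
  classical
  simp only [Orth, not_forall] at hab
  obtain ⟨x, hx, v, hv, hxv⟩ := hab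
  have hvQ : v ∈ ⨆ c : Q, (c : Submodule ℂ H) := by
    rw [← sSup_eq_iSup', htop]
    trivial
  obtain ⟨g, hg, rfl⟩ := (Submodule.mem_iSup_iff_exists_finsupp _ v).mp hvQ
  have inner_sum_eq (w : H) :
      inner ℂ w (g.sum fun _ z => z) = ∑ c ∈ g.support, inner ℂ w (g c) := by
    rw [Finsupp.sum, inner_sum]
  rw [inner_sum_eq] at hxv
  obtain ⟨c, hc, hxc⟩ := Finset.exists_ne_zero_of_sum_ne_zero hxv
  have hgc : g c ≠ 0 := fun h => hxc (by rw [h, inner_zero_right])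
  have hcv : inner ℂ (g c) (g.sum fun _ z => z) = inner ℂ (g c) (g c) := by
    rw [inner_sum_eq, Finset.sum_eq_single_of_mem c hc]
    intro d _ hdc
    exact hQ _ c.2 _ d.2 (fun h => hdc (Subtype.ext h).symm) _ (hg c) _ (hg d)
  refine ⟨c, c.2, fun h => hxc (h x hx _ (hg c)), fun h => ?_⟩
  exact inner_self_ne_zero.mpr hgc (hcv ▸ h _ (hg c) _ hv)

lemma IsPartition.exists_mem_not_orth [FiniteDimensional ℂ H] {Q : Set (Submodule ℂ H)}
    (hQ : IsPartition Q) {a b : Submodule ℂ H} (hab : ¬ Orth a b) :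
    ∃ c ∈ Q, ¬ Orth a c ∧ ¬ Orth c b :=
  exists_mem_not_orth_of_sSup_eq_top hQ.2.2.1 hQ.sSup_eq_top hab

theorem label_le_limit_label_general
    [FiniteDimensional ℂ H]
    (P : ℕ → Set (Submodule ℂ H)) (hP : ∀ i, IsPartition (P i))
    (f : ℕ → Submodule ℂ H → S)
    (Pinf : Set (Submodule ℂ H))
    (finf : Submodule ℂ H → S) (hfinf : IsLimitLabeling P f Pinf finf)
    (n : ℕ) (p : Submodule ℂ H) (hp : p ∈ P n)
    (pinf : Submodule ℂ H) (hpinf : pinf ∈ Pinf)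
    (horth : ¬ Orth p pinf) :
    f n p ≤ finf pinf := by
  obtain ⟨q, hqn, hq⟩ := exists_chain_through
    (A := fun i => {c | c ∈ P i ∧ ¬ Orth c pinf}) (R := fun c d => ¬ Orth c d)
    (fun i c hc => by
      obtain ⟨d, hd, hcd, hdpinf⟩ := (hP (i + 1)).exists_mem_not_orth hc.2
      exact ⟨d, ⟨hd, hdpinf⟩, hcd⟩)
    (fun i d hd => by
      obtain ⟨c, hc, hdc, hcpinf⟩ := (hP i).exists_mem_not_orth hd.2
      exact ⟨c, ⟨hc, hcpinf⟩, fun h => hdc h.symm⟩)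
    (show p ∈ {c | c ∈ P n ∧ ¬ Orth c pinf} from ⟨hp, horth⟩)
  have hlub := hfinf pinf hpinf q (fun i => (hq i).1.1) (fun i => (hq i).2) (fun i => (hq i).1.2)
  exact hqn ▸ hlub.1 ⟨n, rfl⟩

/-- Let `S` be a cpo, `H` a nonzero finite-dimensional complex Hilbert
space, `(P i, f i)` a monotone `S`-labeled sequence of partitions of `H`, `Pinf` the eventual
supremum of `(P i)`, and `finf` a limit labeling.  Then for every `n`, every cell `p ∈ P n`,
and every cell `pinf ∈ Pinf`, if `p` is not orthogonal to `pinf` then `f n p ⊑ finf pinf`. -/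
theorem label_le_limit_label
    (hcpo : ∀ g : ℕ → S, Monotone g → ∃ s, IsLUB (Set.range g) s)
    [FiniteDimensional ℂ H] [Nontrivial H]
    (P : ℕ → Set (Submodule ℂ H)) (hP : ∀ i, IsPartition (P i))
    (f : ℕ → Submodule ℂ H → S) (hf : MonotoneLabeled P f)
    (Pinf : Set (Submodule ℂ H)) (hPinf : IsPartition Pinf)
    (hev : IsEventualSup P Pinf)
    (finf : Submodule ℂ H → S) (hfinf : IsLimitLabeling P f Pinf finf)
    (n : ℕ) (p : Submodule ℂ H) (hp : p ∈ P n)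
    (pinf : Submodule ℂ H) (hpinf : pinf ∈ Pinf)
    (horth : ¬ Orth p pinf) :
    f n p ≤ finf pinf :=
  label_le_limit_label_general P hP f Pinf finf hfinf n p hp pinf hpinf horth
end
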